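/- Given a triangulation T of a convex polygon and a weighting p (a function from vertices to Z/3), there is at most one 2-colouring s of the triangles of T such that for every vertex x, p(x) equals the sum mod 3 of s over the triangles incident with x. -/

import Mathlib

namespace PolyFlip


/-- Two vertices of the convex `N`-gon are consecutive along the boundary. -/
def BdryAdj (N : ℕ) (i j : Fin N) : Prop :=
  (i.val + 1) % N = j.val ∨ (j.val + 1) % N = i.val

/-- `d` is a diagonal of the convex `N`-gon: an unordered pair of distinct,
non-consecutive vertices. -/
def IsDiag (N : ℕ) (d : Finset (Fin N)) : Prop :=
  ∃ i j : Fin N, i ≠ j ∧ ¬ BdryAdj N i j ∧ d = {i, j}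

/-- The chord `d` crosses the chord `e` (in this orientation): the endpoints
interlace in the cyclic (here: linear) order of the polygon's vertices. -/
def Crosses {N : ℕ} (d e : Finset (Fin N)) : Prop :=
  ∃ a b c f : Fin N, d = {a, b} ∧ e = {c, f} ∧ a < c ∧ c < b ∧ b < f

/-- A triangulation of the convex `N`-gon: a maximal set of pairwise
non-crossing diagonals. -/
structure Triangulation (N : ℕ) where
  diags : Finset (Finset (Fin N))
  isDiag : ∀ d ∈ diags, IsDiag N d
  noncross : ∀ d ∈ diags, ∀ e ∈ diags, ¬ Crosses d e
  maximal : ∀ d, IsDiag N d → (∀ e ∈ diags, ¬ Crosses d e ∧ ¬ Crosses e d) → d ∈ diags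

/-- `a` and `b` are joined by an edge of the triangulated polygon:
either a boundary edge, or a diagonal of the triangulation. -/
def IsEdge {N : ℕ} (T : Triangulation N) (a b : Fin N) : Prop :=
  a ≠ b ∧ (BdryAdj N a b ∨ ({a, b} : Finset (Fin N)) ∈ T.diags)

/-- `t` is a triangle (face) of the triangulation `T`. -/
def IsTriangle {N : ℕ} (T : Triangulation N) (t : Finset (Fin N)) : Prop :=
  ∃ a b c : Fin N, a ≠ b ∧ a ≠ c ∧ b ≠ c ∧ t = {a, b, c} ∧
    IsEdge T a b ∧ IsEdge T a c ∧ IsEdge T b c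

/-- A coloured triangulation: a triangulation together with a colour in
`Fin m` for each of its triangles. -/
structure ColouredTri (N m : ℕ) where
  T : Triangulation N
  col : {t : Finset (Fin N) // IsTriangle T t} → Fin m

/-- The degree of a vertex `x` in the triangulated polygon. -/
noncomputable def degree {N : ℕ} (T : Triangulation N) (x : Fin N) : ℕ :=
  Nat.card {y : Fin N // IsEdge T x y}

/-- The `σ`-flip at the diagonal `d`: `d = {a,b}` is a diagonal of `C` whose two
incident triangles `{a,b,x}` and `{a,b,y}` have the same colour `i`; it is replaced by
the other diagonal `{x,y}` of the quadrilateral, the two new triangles `{a,x,y}` and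
`{b,x,y}` get colour `σ i`, and all other triangles keep their colours. -/
def SFlipAt {N m : ℕ} (σ : Equiv.Perm (Fin m)) (d : Finset (Fin N))
    (C C' : ColouredTri N m) : Prop :=
  ∃ (a b x y : Fin N) (h₁ : IsTriangle C.T {a, b, x}) (h₂ : IsTriangle C.T {a, b, y})
    (h₁' : IsTriangle C'.T {a, x, y}) (h₂' : IsTriangle C'.T {b, x, y}),
    d = {a, b} ∧ d ∈ C.T.diags ∧ x ≠ y ∧
    C.col ⟨{a, b, x}, h₁⟩ = C.col ⟨{a, b, y}, h₂⟩ ∧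
    C'.T.diags = insert {x, y} (C.T.diags.erase d) ∧
    C'.col ⟨{a, x, y}, h₁'⟩ = σ (C.col ⟨{a, b, x}, h₁⟩) ∧
    C'.col ⟨{b, x, y}, h₂'⟩ = σ (C.col ⟨{a, b, x}, h₁⟩) ∧
    ∀ (t : Finset (Fin N)) (ht : IsTriangle C.T t) (ht' : IsTriangle C'.T t),
      t ≠ {a, b, x} → t ≠ {a, b, y} → C'.col ⟨t, ht'⟩ = C.col ⟨t, ht⟩

/-- The `σ`-flip relation. -/
def SFlip {N m : ℕ} (σ : Equiv.Perm (Fin m)) (C C' : ColouredTri N m) : Prop :=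
  ∃ d, SFlipAt σ d C C'

/-- The 2-coloured flip at a diagonal (the colour permutation swaps the two colours). -/
abbrev Flip2At {N : ℕ} (d : Finset (Fin N)) (C C' : ColouredTri N 2) : Prop :=
  SFlipAt (finRotate 2) d C C'

/-- The 2-coloured flip relation. -/
abbrev Flip2 {N : ℕ} (C C' : ColouredTri N 2) : Prop :=
  SFlip (finRotate 2) C C'

/-- The 2-coloured flip graph of the convex `N`-gon: vertices are the 2-coloured
triangulations, edges are single 2-coloured flips. -/
def flipGraph (N : ℕ) : SimpleGraph (ColouredTri N 2) where
  Adj C C' := C ≠ C' ∧ (Flip2 C C' ∨ Flip2 C' C)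
  symm := ⟨fun C C' h => ⟨h.1.symm, h.2.symm⟩⟩
  loopless := ⟨fun C h => h.1 rfl⟩

/-- The sign (`+1` for colour `0`, `-1` for colour `1`) of a colour, in `ZMod 3`. -/
def signVal (c : Fin 2) : ZMod 3 := if c = 0 then 1 else -1

/-- The weight of a vertex `x`: the sum, modulo 3, of the signs of all triangles
incident with `x`. -/
noncomputable def weight {N : ℕ} (C : ColouredTri N 2) (x : Fin N) : ZMod 3 :=
  ∑ᶠ t : {t : Finset (Fin N) // IsTriangle C.T t},
    if x ∈ t.val then signVal (C.col t) else 0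

/-- The number of triangles coloured `+1` (colour `0`). -/
noncomputable def plusCount {N : ℕ} (C : ColouredTri N 2) : ℕ :=
  Nat.card {t : {t : Finset (Fin N) // IsTriangle C.T t} // C.col t = 0}

/-- Adjacency in the `k`-dimensional hypercube: the two vertices differ in
exactly one coordinate. -/
def cubeAdj (k : ℕ) (u v : Fin k → Bool) : Prop := ∃! i, u i ≠ v i

/-- The `k`-dimensional hypercube graph on `{0,1}^k`. -/
def cubeGraph (k : ℕ) : SimpleGraph (Fin k → Bool) where
  Adj := cubeAdj k
  symm := by
    refine ⟨?_⟩
    rintro u v ⟨i, hi, hu⟩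
    exact ⟨i, hi.symm, fun j hj => hu j hj.symm⟩
  loopless := by
    refine ⟨?_⟩
    rintro u ⟨i, hi, -⟩
    exact hi rfl

/-- `f` exhibits a `k`-dimensional hypercube inside the connected component of `C`
in the 2-coloured flip graph. -/
def CubeEmb {N : ℕ} (C : ColouredTri N 2) (k : ℕ)
    (f : (Fin k → Bool) → ColouredTri N 2) : Prop :=
  Function.Injective f ∧
  (∀ u v, cubeAdj k u v → (flipGraph N).Adj (f u) (f v)) ∧
  ∀ u, (flipGraph N).Reachable C (f u)

/-- `G` contains a subdivision (topological copy) of `H`: there are branch vertices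
`f w` for the vertices `w` of `H` and internally disjoint paths in `G` between them
realising the edges of `H`. -/
def ContainsSubdivision {V W : Type*} (G : SimpleGraph V) (H : SimpleGraph W) : Prop :=
  ∃ f : W → V, Function.Injective f ∧
    ∃ P : ∀ u v : W, H.Adj u v → G.Walk (f u) (f v),
      (∀ u v (h : H.Adj u v), (P u v h).IsPath) ∧
      (∀ u v (h : H.Adj u v) (w : W), f w ∈ (P u v h).support → w = u ∨ w = v) ∧
      (∀ u₁ v₁ (h₁ : H.Adj u₁ v₁) u₂ v₂ (h₂ : H.Adj u₂ v₂),
        (s(u₁, v₁) : Sym2 W) ≠ s(u₂, v₂) →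
        ∀ x, x ∈ (P u₁ v₁ h₁).support → x ∈ (P u₂ v₂ h₂).support →
          (x = f u₁ ∨ x = f v₁) ∧ (x = f u₂ ∨ x = f v₂))

/-- Planarity, via Kuratowski's characterisation: a graph is planar iff it contains
no subdivision of `K₅` and no subdivision of `K₃,₃`. -/
def IsPlanar {V : Type*} (G : SimpleGraph V) : Prop :=
  ¬ ContainsSubdivision G (SimpleGraph.completeGraph (Fin 5)) ∧
  ¬ ContainsSubdivision G (completeBipartiteGraph (Fin 3) (Fin 3))

/-! Two colourings with the same weighting give sign functions with equal sums at every vertex.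
By induction on `j - i`, such functions agree on every triangle lying under an edge `ij` with
`i < j`: the triangle `{i, k, j}` on that edge is the only triangle at its apex `k` that does not
lie under one of the shorter edges `ik` and `kj`, so the equation at `k` forces agreement on it.
The boundary edge joining the first and the last vertex lies over every triangle. -/

section Uniqueness

variable {N : ℕ}

lemma pair_eq_pair_of_lt {α : Type*} [LinearOrder α] {a b c d : α} (hab : a < b) (hcd : c < d)
    (h : ({a, b} : Finset α) = {c, d}) : a = c ∧ b = d := by
  have h' := congrArg (fun s : Finset α => (s : Set α)) h
  simp only [Finset.coe_pair, Set.pair_eq_pair_iff] at h'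
  rcases h' with h' | ⟨rfl, rfl⟩
  · exact h'
  · exact absurd hcd (lt_asymm hab)

lemma BdryAdj.of_val_add_one {a b : Fin N} (h : a.val + 1 = b.val) : BdryAdj N a b :=
  Or.inl (by rw [h, Nat.mod_eq_of_lt b.isLt])

lemma BdryAdj.val_add_one_eq_or {a b : Fin N} (hab : a < b) (h : BdryAdj N a b) :
    a.val + 1 = b.val ∨ (a.val = 0 ∧ b.val + 1 = N) := by
  have hab' : a.val < b.val := hab
  rcases h with h | h
  · rw [Nat.mod_eq_of_lt (by omega)] at h
    omega
  · rcases Nat.lt_or_ge (b.val + 1) N with hb | hb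
    · rw [Nat.mod_eq_of_lt hb] at h
      omega
    · rw [show b.val + 1 = N by omega, Nat.mod_self] at h
      omega

lemma isDiag_pair {a b : Fin N} (hab : a.val + 1 < b.val) (ha : 0 < a.val) :
    IsDiag N {a, b} := by
  refine ⟨a, b, fun h => by simp [h] at hab, fun hadj => ?_, rfl⟩
  have := hadj.val_add_one_eq_or (show a.val < b.val by omega)
  omega

lemma IsEdge.symm {T : Triangulation N} {a b : Fin N} (h : IsEdge T a b) : IsEdge T b a := by
  obtain ⟨hne, hadj | hmem⟩ := h
  · exact ⟨hne.symm, Or.inl hadj.symm⟩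
  · exact ⟨hne.symm, Or.inr (Finset.pair_comm a b ▸ hmem)⟩

lemma IsEdge.mem_diags {T : Triangulation N} {a c b : Fin N} (h : IsEdge T a b)
    (hac : a < c) (hcb : c < b) (houter : 0 < a.val ∨ b.val + 1 < N) :
    ({a, b} : Finset (Fin N)) ∈ T.diags := by
  have hac' : a.val < c.val := hac
  have hcb' : c.val < b.val := hcb
  refine h.2.resolve_left fun hadj => ?_
  have := hadj.val_add_one_eq_or (hac.trans hcb)
  omega

lemma IsEdge.not_interlaced {T : Triangulation N} {a b c f : Fin N} (hab : IsEdge T a b)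
    (hac : a < c) (hcb : c < b) (hbf : b < f) : ¬ IsEdge T c f := fun hcf =>
  T.noncross _ (hab.mem_diags hac hcb (Or.inr (by omega)))
    _ (hcf.mem_diags hcb hbf (Or.inl (by omega))) ⟨a, b, c, f, rfl, rfl, hac, hcb, hbf⟩

lemma IsTriangle.isEdge {T : Triangulation N} {t : Finset (Fin N)} (ht : IsTriangle T t)
    {x y : Fin N} (hx : x ∈ t) (hy : y ∈ t) (hxy : x ≠ y) : IsEdge T x y := by
  obtain ⟨a, b, c, -, -, -, rfl, eab, eac, ebc⟩ := ht
  simp only [Finset.mem_insert, Finset.mem_singleton] at hx hy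
  rcases hx with rfl | rfl | rfl <;> rcases hy with rfl | rfl | rfl <;>
    first
      | exact absurd rfl hxy
      | assumption
      | exact eab.symm
      | exact eac.symm
      | exact ebc.symm

lemma IsTriangle.card_eq_three {T : Triangulation N} {t : Finset (Fin N)}
    (ht : IsTriangle T t) : t.card = 3 := by
  obtain ⟨a, b, c, hab, hac, hbc, rfl, -⟩ := ht
  exact Finset.card_eq_three.mpr ⟨a, b, c, hab, hac, hbc, rfl⟩

lemma IsTriangle.subset_Icc {T : Triangulation N} {i j x : Fin N} (hij : IsEdge T i j)
    (hix : i < x) (hxj : x < j) {t : Finset (Fin N)} (ht : IsTriangle T t) (hx : x ∈ t) :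
    t ⊆ Finset.Icc i j := by
  intro y hy
  rw [Finset.mem_Icc]
  constructor
  · by_contra! hyi
    exact (ht.isEdge hy hx (hyi.trans hix).ne).not_interlaced hyi hix hxj hij
  · by_contra! hjy
    exact hij.not_interlaced hix hxj hjy (ht.isEdge hx hy (hxj.trans hjy).ne)

lemma IsTriangle.subset_Icc_or_subset_Icc {T : Triangulation N} {i j k : Fin N}
    {t : Finset (Fin N)} (ht : IsTriangle T t) (hsub : t ⊆ Finset.Icc i j)
    (hik : i < k) (hkj : k < j) (eik : IsEdge T i k) (ekj : IsEdge T k j)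
    (hne : t ≠ {i, k, j}) : t ⊆ Finset.Icc i k ∨ t ⊆ Finset.Icc k j := by
  by_contra! ⟨hleft, hright⟩
  obtain ⟨v, hvt, hv⟩ := Finset.not_subset.mp hleft
  obtain ⟨u, hut, hu⟩ := Finset.not_subset.mp hright
  have hmem : ∀ w ∈ t, i ≤ w ∧ w ≤ j := fun w hw => Finset.mem_Icc.mp (hsub hw)
  have hkv : k < v := by
    by_contra! h
    exact hv (Finset.mem_Icc.mpr ⟨(hmem v hvt).1, h⟩)
  have huk : u < k := by
    by_contra! h
    exact hu (Finset.mem_Icc.mpr ⟨h, (hmem u hut).2⟩)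
  have euv : IsEdge T u v := ht.isEdge hut hvt (huk.trans hkv).ne
  have hui : u = i := by
    by_contra h
    exact eik.not_interlaced (lt_of_le_of_ne (hmem u hut).1 (Ne.symm h)) huk hkv euv
  have hvj : v = j := by
    by_contra h
    exact euv.not_interlaced huk hkv (lt_of_le_of_ne (hmem v hvt).2 h) ekj
  subst hui hvj
  refine hne (Finset.eq_of_subset_of_card_le (fun w hw => ?_) ?_)
  · simp only [Finset.mem_insert, Finset.mem_singleton]
    by_contra! ⟨hwu, hwk, hwv⟩
    have huw := lt_of_le_of_ne (hmem w hw).1 (Ne.symm hwu)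
    have hwv := lt_of_le_of_ne (hmem w hw).2 hwv
    rcases lt_or_gt_of_ne hwk with hwk | hkw
    · exact eik.not_interlaced huw hwk hkv (ht.isEdge hw hvt hwv.ne)
    · exact (ht.isEdge hut hw huw.ne).not_interlaced hik hkw hwv ekj
  · rw [ht.card_eq_three,
      Finset.card_eq_three.mpr ⟨u, k, v, hik.ne, (hik.trans hkj).ne, hkj.ne, rfl⟩]

/-- The maximality of `T` enters here: if `{k, j}` were not an edge, a diagonal of `T` would cross
it, and each position of that diagonal contradicts either planarity or the choice of `k`. -/
lemma IsEdge.isEdge_of_forall_not_isEdge {T : Triangulation N} {i j k : Fin N}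
    (eij : IsEdge T i j) (hik : i < k) (hkj : k < j) (eik : IsEdge T i k)
    (hmax : ∀ l, k < l → l < j → ¬ IsEdge T i l) : IsEdge T k j := by
  by_contra hnot
  have hik' : i.val < k.val := hik
  have hkj' : k.val < j.val := hkj
  have hgap : k.val + 1 < j.val := by
    by_contra h
    exact hnot ⟨hkj.ne, Or.inl (BdryAdj.of_val_add_one (by omega))⟩
  obtain ⟨e, he, hcross⟩ : ∃ e ∈ T.diags, Crosses {k, j} e ∨ Crosses e {k, j} := by
    by_contra! h
    exact hnot ⟨hkj.ne, Or.inr (T.maximal _ (isDiag_pair hgap (by omega)) h)⟩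
  rcases hcross with ⟨a, b, c, f, hkj_eq, rfl, hac, hcb, hbf⟩ |
    ⟨a, b, c, f, rfl, hkj_eq, hac, hcb, hbf⟩
  · obtain ⟨rfl, rfl⟩ := pair_eq_pair_of_lt hkj (hac.trans hcb) hkj_eq
    exact eij.not_interlaced (hik.trans hac) hcb hbf ⟨(hcb.trans hbf).ne, Or.inr he⟩
  · obtain ⟨rfl, rfl⟩ := pair_eq_pair_of_lt hkj (hcb.trans hbf) hkj_eq
    have eab : IsEdge T a b := ⟨(hac.trans hcb).ne, Or.inr he⟩
    rcases lt_trichotomy a i with hai | rfl | hia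
    · exact eab.not_interlaced hai (hik.trans hcb) hbf eij
    · exact hmax b hcb hbf eab
    · exact eik.not_interlaced hia hac hcb eab

lemma IsEdge.exists_apex {T : Triangulation N} {i j : Fin N} (eij : IsEdge T i j)
    (hgap : i.val + 1 < j.val) : ∃ k, i < k ∧ k < j ∧ IsEdge T i k ∧ IsEdge T k j := by
  classical
  let K := Finset.univ.filter fun k => i < k ∧ k < j ∧ IsEdge T i k
  have hsucc : i.val + 1 < N := hgap.trans j.isLt
  have hK : K.Nonempty := ⟨⟨i.val + 1, hsucc⟩, by
    simp only [K, Finset.mem_filter, Finset.mem_univ, true_and, Fin.lt_def]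
    exact ⟨by omega, hgap, Fin.ne_of_val_ne (by simp), Or.inl (BdryAdj.of_val_add_one rfl)⟩⟩
  obtain ⟨-, hik, hkj, eik⟩ := Finset.mem_filter.mp (K.max'_mem hK)
  refine ⟨_, hik, hkj, eik, eij.isEdge_of_forall_not_isEdge hik hkj eik fun l hkl hlj eil => ?_⟩
  have hlK : l ∈ K := Finset.mem_filter.mpr ⟨Finset.mem_univ _, hik.trans hkl, hlj, eil⟩
  exact (K.le_max' l hlK).not_gt hkl

lemma eq_of_finsum_eq_of_forall_ne {α M : Type*} [Finite α] [AddCancelCommMonoid M]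
    {f g : α → M} (a₀ : α) (hsum : ∑ᶠ a, f a = ∑ᶠ a, g a) (hne : ∀ a, a ≠ a₀ → f a = g a) :
    f a₀ = g a₀ := by
  classical
  have := Fintype.ofFinite α
  rw [finsum_eq_sum_of_fintype, finsum_eq_sum_of_fintype,
    ← Finset.add_sum_erase _ _ (Finset.mem_univ a₀),
    ← Finset.add_sum_erase _ _ (Finset.mem_univ a₀),
    Finset.sum_congr rfl fun a ha => hne a (Finset.ne_of_mem_erase ha)] at hsum
  exact add_right_cancel hsum

noncomputable def vertexSum {M : Type*} [AddCommMonoid M] (T : Triangulation N)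
    (f : {t : Finset (Fin N) // IsTriangle T t} → M) (x : Fin N) : M :=
  ∑ᶠ t : {t : Finset (Fin N) // IsTriangle T t}, if x ∈ t.val then f t else 0

lemma eq_of_vertexSum_eq_of_subset_Icc {M : Type*} [AddCancelCommMonoid M] {T : Triangulation N}
    {f g : {t : Finset (Fin N) // IsTriangle T t} → M}
    (hfg : ∀ x, vertexSum T f x = vertexSum T g x) {i j : Fin N} (hij : i < j)
    (eij : IsEdge T i j) (t : {t : Finset (Fin N) // IsTriangle T t})
    (hsub : t.val ⊆ Finset.Icc i j) : f t = g t := by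
  induction hd : j.val - i.val using Nat.strong_induction_on generalizing i j t with
  | _ d ih =>
  have hij' : i.val < j.val := hij
  by_cases hgap : i.val + 1 < j.val
  swap
  · have hcard := Finset.card_le_card hsub
    rw [t.2.card_eq_three, Fin.card_Icc] at hcard
    omega
  obtain ⟨k, hik, hkj, eik, ekj⟩ := eij.exists_apex hgap
  have hik' : i.val < k.val := hik
  have hkj' : k.val < j.val := hkj
  have hothers : ∀ s : {t : Finset (Fin N) // IsTriangle T t}, s.val ⊆ Finset.Icc i j →
      s.val ≠ {i, k, j} → f s = g s := fun s hs hne =>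
    (s.2.subset_Icc_or_subset_Icc hs hik hkj eik ekj hne).elim
      (ih _ (by omega) hik eik s · rfl) (ih _ (by omega) hkj ekj s · rfl)
  by_cases ht : t.val = {i, k, j}
  swap
  · exact hothers t hsub ht
  have hk : k ∈ t.val := by simp [ht]
  have := eq_of_finsum_eq_of_forall_ne t (hfg k) fun s hs => ?_
  · simpa [hk] using this
  by_cases hks : k ∈ s.val
  · simp only [hks, if_true]
    exact hothers s (s.2.subset_Icc eij hik hkj hks) fun h => hs (Subtype.ext (h.trans ht.symm))
  · simp only [hks, if_false]

lemma signVal_injective : Function.Injective signVal := by decide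

end Uniqueness

theorem colouring_unique_given_weighting_general (n : ℕ)
    (T : Triangulation (n + 2)) (p : Fin (n + 2) → ZMod 3)
    (s₁ s₂ : {t : Finset (Fin (n + 2)) // IsTriangle T t} → Fin 2)
    (h₁ : ∀ x, weight ⟨T, s₁⟩ x = p x) (h₂ : ∀ x, weight ⟨T, s₂⟩ x = p x) :
    s₁ = s₂ := by
  have hsum : ∀ x, vertexSum T (signVal ∘ s₁) x = vertexSum T (signVal ∘ s₂) x :=
    fun x => (h₁ x).trans (h₂ x).symm
  have hlast : IsEdge T 0 (Fin.last (n + 1)) :=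
    ⟨(Fin.last_pos' (n := n + 1)).ne, Or.inl (Or.inr (by simp))⟩
  funext t
  exact signVal_injective (eq_of_vertexSum_eq_of_subset_Icc hsum (Fin.last_pos' (n := n + 1))
    hlast t fun x _ => Finset.mem_Icc.mpr ⟨Fin.zero_le x, Fin.le_last x⟩)

/-- Given a triangulation `T` of a convex `(n+2)`-gon and a weighting
`p : vertices → ZMod 3`, there is at most one 2-colouring of the triangles of `T`
whose weighting is `p`. -/
theorem colouring_unique_given_weighting (n : ℕ) (hn : 1 ≤ n)
    (T : Triangulation (n + 2)) (p : Fin (n + 2) → ZMod 3)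
    (s₁ s₂ : {t : Finset (Fin (n + 2)) // IsTriangle T t} → Fin 2)
    (h₁ : ∀ x, weight ⟨T, s₁⟩ x = p x) (h₂ : ∀ x, weight ⟨T, s₂⟩ x = p x) :
    s₁ = s₂ :=
  colouring_unique_given_weighting_general n T p s₁ s₂ h₁ h₂

end PolyFlip
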